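/- Let A be a smooth (or Lipschitz) function supported in [-D,D]³ with sup-norm ‖A‖ and Lipschitz constant ‖dA‖. Then there is a universal constant C such that for all n ≥ 1 and all x outside ∪_i B(p_{i,n}, D/n²), the weighted Riemann sum ∑_i A(p_{i,n})(D/n)³/|x - p_{i,n}| differs from ∫_{[-D,D]³} A(y)/|x-y| dy by at most (C/n)(‖A‖D² + ‖dA‖D³). -/

import Mathlib

open MeasureTheory

/-- The closed cube `[-D,D]³ ⊆ ℝ³`. -/
def cube (D : ℝ) : Set (EuclideanSpace ℝ (Fin 3)) :=
  {y | ∀ i, y i ∈ Set.Icc (-D) D}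

/-- The midpoint `p_{i,n}` of the subdivision box of side `D/n` indexed by
`v ∈ (Fin (2n))³` (corresponding to integer coordinates `−n ≤ i,j,k < n`). -/
noncomputable def midpt (D : ℝ) (n : ℕ) (v : Fin (2 * n) × Fin (2 * n) × Fin (2 * n)) :
    EuclideanSpace ℝ (Fin 3) :=
  (WithLp.equiv 2 (Fin 3 → ℝ)).symm
    ![(((v.1 : ℕ) : ℝ) - n + 1 / 2) * (D / n),
      (((v.2.1 : ℕ) : ℝ) - n + 1 / 2) * (D / n),
      (((v.2.2 : ℕ) : ℝ) - n + 1 / 2) * (D / n)]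

open Metric Set ENNReal

local notation "E3" => EuclideanSpace ℝ (Fin 3)

lemma coord_le_norm (z : E3) (i : Fin 3) : |z i| ≤ ‖z‖ := by
  rw [EuclideanSpace.norm_eq, ← Real.sqrt_sq_eq_abs]
  apply Real.sqrt_le_sqrt
  simpa using Finset.single_le_sum (f := fun j => ‖z j‖ ^ 2) (fun j _ => sq_nonneg _)
    (Finset.mem_univ i)

lemma norm_le_sqrt3 (z : E3) (m : ℝ) (hm : ∀ i, |z i| ≤ m) : ‖z‖ ≤ Real.sqrt 3 * m := by
  have hm0 : 0 ≤ m := (abs_nonneg _).trans (hm 0)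
  rw [EuclideanSpace.norm_eq]
  have key : ∑ i, ‖z i‖ ^ 2 ≤ 3 * m ^ 2 := by
    have h1 : ∀ i : Fin 3, ‖z i‖ ^ 2 ≤ m ^ 2 := fun i => by
      rw [Real.norm_eq_abs, ← sq_abs, abs_abs]
      exact pow_le_pow_left₀ (abs_nonneg _) (hm i) 2
    calc ∑ i, ‖z i‖ ^ 2 ≤ ∑ _i : Fin 3, m ^ 2 := Finset.sum_le_sum fun i _ => h1 i
    _ = 3 * m ^ 2 := by simp [Finset.sum_const]
  calc Real.sqrt (∑ i, ‖z i‖ ^ 2) ≤ Real.sqrt (3 * m ^ 2) := Real.sqrt_le_sqrt key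
  _ = Real.sqrt 3 * m := by rw [Real.sqrt_mul (by norm_num), Real.sqrt_sq hm0]

lemma coordbox_eq_preimage (s : Fin 3 → Set ℝ) :
    {y : E3 | ∀ i, y i ∈ s i} =
      (MeasurableEquiv.toLp 2 (Fin 3 → ℝ)).symm ⁻¹' (Set.univ.pi s) := by
  ext y
  constructor
  · intro h
    exact fun i _ => h i
  · intro h i
    exact h i (Set.mem_univ i)

lemma vol_coordbox (s : Fin 3 → Set ℝ) (hs : ∀ i, MeasurableSet (s i)) :
    volume {y : E3 | ∀ i, y i ∈ s i} = ∏ i, volume (s i) := by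
  rw [coordbox_eq_preimage, (EuclideanSpace.volume_preserving_symm_measurableEquiv_toLp (Fin 3)).measure_preimage
    ((MeasurableSet.univ_pi hs).nullMeasurableSet), volume_pi_pi]

lemma measurable_coordbox (s : Fin 3 → Set ℝ) (hs : ∀ i, MeasurableSet (s i)) :
    MeasurableSet {y : E3 | ∀ i, y i ∈ s i} := by
  rw [coordbox_eq_preimage]
  exact (MeasurableEquiv.toLp 2 (Fin 3 → ℝ)).symm.measurable (MeasurableSet.univ_pi hs)

/-- volume of a ball in `E3` is at most `(2r)³`. -/
lemma vol_ball_le (x : E3) (r : ℝ) (hr : 0 ≤ r) :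
    volume (ball x r) ≤ ENNReal.ofReal (8 * r ^ 3) := by
  have hsub : ball x r ⊆ {y : E3 | ∀ i, y i ∈ Icc (x i - r) (x i + r)} := by
    intro y hy i
    have h1 : |y i - x i| ≤ ‖y - x‖ := by simpa using coord_le_norm (y - x) i
    have h2 : ‖y - x‖ < r := by rw [← dist_eq_norm]; exact mem_ball.mp hy
    have := h1.trans h2.le
    rw [abs_le] at this
    exact ⟨by linarith [this.1], by linarith [this.2]⟩
  refine (measure_mono hsub).trans (le_of_eq ?_)
  rw [vol_coordbox _ (fun i => measurableSet_Icc)]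
  simp only [Real.volume_Icc]
  calc ∏ i : Fin 3, ENNReal.ofReal (x i + r - (x i - r))
      = ∏ _i : Fin 3, ENNReal.ofReal (2*r) := by
        apply Finset.prod_congr rfl; intro i _; congr 1; ring
    _ = ENNReal.ofReal (2*r) ^ 3 := by simp
    _ = ENNReal.ofReal (8 * r^3) := by
        rw [← ENNReal.ofReal_pow (by linarith)]; congr 1; ring

lemma lintegral_ball_inv_le (x : E3) (R : ℝ) (hR : 0 < R) (s : ℕ) (hs1 : 1 ≤ s) (hs2 : s ≤ 2) :
    ∫⁻ y in ball x R, ENNReal.ofReal (‖x - y‖⁻¹ ^ s) ≤ ENNReal.ofReal (64 * R ^ (3 - s)) := by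
  set f : E3 → ℝ≥0∞ := fun y => ENNReal.ofReal (‖x - y‖⁻¹ ^ s) with hf
  set A : ℕ → Set E3 := fun k => {y | R / 2 ^ (k+1) ≤ ‖x - y‖ ∧ ‖x - y‖ < R / 2 ^ k} with hA
  have hcover : ball x R ⊆ {x} ∪ ⋃ k, A k := by
    intro y hy
    rcases eq_or_ne y x with rfl | hne
    · exact Or.inl rfl
    right
    have hd0 : 0 < ‖x - y‖ := by rw [norm_pos_iff, sub_ne_zero]; exact (Ne.symm hne)
    have hdR : ‖x - y‖ < R := by
      rw [mem_ball, dist_eq_norm] at hy; rwa [norm_sub_rev]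
    have hex : ∃ k : ℕ, R / 2 ^ (k+1) ≤ ‖x - y‖ := by
      obtain ⟨k, hk⟩ := pow_unbounded_of_one_lt (R / ‖x - y‖) (one_lt_two (α := ℝ))
      refine ⟨k, ?_⟩
      rw [div_le_iff₀ (by positivity)]
      rw [div_lt_iff₀ hd0] at hk
      calc R ≤ ‖x - y‖ * 2 ^ k := by linarith [hk.le]
      _ ≤ ‖x - y‖ * 2 ^ (k+1) := by
          have h1 : (2:ℝ)^k ≤ 2^(k+1) := pow_le_pow_right₀ one_le_two (Nat.le_succ k)
          nlinarith
    classical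
    refine mem_iUnion.2 ⟨Nat.find hex, Nat.find_spec hex, ?_⟩
    rcases Nat.eq_zero_or_pos (Nat.find hex) with h0 | hpos
    · rw [h0]; simpa using hdR
    · obtain ⟨m, hm⟩ : ∃ m, Nat.find hex = m + 1 := ⟨Nat.find hex - 1, by omega⟩
      have hmin := Nat.find_min hex (m := m) (by omega)
      rw [hm]
      push_neg at hmin
      exact hmin
  have h3 : ∫⁻ y in ({x} : Set E3), f y = 0 := by
    rw [Measure.restrict_eq_zero.2 (measure_singleton x), lintegral_zero_measure]
  have h5 : ∀ k, ∫⁻ y in A k, f y ≤ ENNReal.ofReal (32 * R ^ (3 - s)) * (2⁻¹ : ℝ≥0∞) ^ k := by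
    intro k
    have hb : ∀ y ∈ A k, f y ≤ ENNReal.ofReal ((2 ^ (k+1) / R) ^ s) := by
      intro y hy
      apply ENNReal.ofReal_le_ofReal
      apply pow_le_pow_left₀ (by positivity)
      calc ‖x - y‖⁻¹ ≤ (R / 2 ^ (k+1))⁻¹ :=
            inv_anti₀ (by positivity) hy.1
      _ = 2 ^ (k+1) / R := by rw [inv_div]
    calc ∫⁻ y in A k, f y ≤ ∫⁻ _y in A k, ENNReal.ofReal ((2 ^ (k+1) / R) ^ s) :=
          setLIntegral_mono measurable_const hb
      _ = ENNReal.ofReal ((2 ^ (k+1) / R) ^ s) * volume (A k) := setLIntegral_const _ _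
      _ ≤ ENNReal.ofReal ((2 ^ (k+1) / R) ^ s) * ENNReal.ofReal (8 * (R / 2 ^ k) ^ 3) := by
          apply mul_le_mul_right
          refine le_trans (measure_mono ?_) (vol_ball_le x (R / 2^k) (by positivity))
          intro y hy
          rw [mem_ball, dist_eq_norm, norm_sub_rev]
          exact hy.2
      _ ≤ ENNReal.ofReal (32 * R ^ (3 - s)) * (2⁻¹ : ℝ≥0∞) ^ k := by
          have h2i : ((2:ℝ≥0∞))⁻¹ ^ k = ENNReal.ofReal ((2:ℝ)⁻¹ ^ k) := by
            rw [ENNReal.ofReal_pow (by norm_num), ENNReal.ofReal_inv_of_pos (by norm_num)]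
            norm_num
          rw [h2i, ← ENNReal.ofReal_mul (by positivity), ← ENNReal.ofReal_mul (by positivity)]
          apply ENNReal.ofReal_le_ofReal
          set u : ℝ := 2 ^ k with hu
          have hu1 : (1:ℝ) ≤ u := one_le_pow₀ one_le_two
          have hu0 : (0:ℝ) < u := by positivity
          have hinv : (2:ℝ)⁻¹ ^ k = u⁻¹ := by rw [hu, ← inv_pow]
          have h2k1 : (2:ℝ) ^ (k+1) = 2 * u := by rw [pow_succ]; ring
          rw [hinv, h2k1]
          interval_cases s
          · have he : R ^ (3 - 1) = R ^ 2 := by norm_num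
            rw [he, show (2*u/R)^1 * (8*(R/u)^3) = 16*(R^2)/u^2 from by field_simp; ring,
              div_le_iff₀ (by positivity)]
            have : 32 * R ^ 2 * u⁻¹ * u ^ 2 = 32 * R^2 * u := by field_simp
            rw [this]; nlinarith [sq_nonneg R]
          · have he : R ^ (3 - 2) = R ^ 1 := by norm_num
            rw [he, show (2*u/R)^2 * (8*(R/u)^3) = 32*(R^1)/u from by field_simp; ring,
              div_le_iff₀ (by positivity)]
            have : 32 * R ^ 1 * u⁻¹ * u = 32 * R^1 := by field_simp
            rw [this]
  calc ∫⁻ y in ball x R, f y ≤ ∫⁻ y in {x} ∪ ⋃ k, A k, f y := lintegral_mono_set hcover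
    _ ≤ (∫⁻ y in ({x} : Set E3), f y) + ∫⁻ y in ⋃ k, A k, f y := lintegral_union_le _ _ _
    _ = ∫⁻ y in ⋃ k, A k, f y := by rw [h3, zero_add]
    _ ≤ ∑' k, ∫⁻ y in A k, f y := lintegral_iUnion_le _ _
    _ ≤ ∑' k, ENNReal.ofReal (32 * R ^ (3 - s)) * (2⁻¹ : ℝ≥0∞) ^ k := ENNReal.tsum_le_tsum h5
    _ = ENNReal.ofReal (32 * R ^ (3 - s)) * ∑' k, (2⁻¹ : ℝ≥0∞) ^ k := ENNReal.tsum_mul_left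
    _ = ENNReal.ofReal (32 * R ^ (3 - s)) * 2 := by
        rw [ENNReal.tsum_geometric]
        congr 1
        rw [ENNReal.one_sub_inv_two]
        simp
    _ = ENNReal.ofReal (64 * R ^ (3 - s)) := by
        rw [show (2:ℝ≥0∞) = ENNReal.ofReal 2 from by simp,
          ← ENNReal.ofReal_mul (by positivity)]
        congr 1
        ring

lemma meas_inv_pow (x : E3) (s : ℕ) : Measurable (fun y : E3 => ‖x - y‖⁻¹ ^ s) :=
  ((continuous_const.sub continuous_id).norm.measurable.inv).pow_const s

lemma integrableOn_inv_pow (x : E3) (R : ℝ) (hR : 0 < R) (s : ℕ) (hs1 : 1 ≤ s) (hs2 : s ≤ 2)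
    (S : Set E3) (hS : S ⊆ ball x R) :
    IntegrableOn (fun y : E3 => ‖x - y‖⁻¹ ^ s) S := by
  constructor
  · exact (meas_inv_pow x s).aestronglyMeasurable
  · rw [hasFiniteIntegral_iff_ofReal (Filter.Eventually.of_forall fun y => by positivity)]
    calc ∫⁻ y in S, ENNReal.ofReal (‖x - y‖⁻¹ ^ s) ∂volume
        ≤ ∫⁻ y in ball x R, ENNReal.ofReal (‖x - y‖⁻¹ ^ s) ∂volume := lintegral_mono_set hS
      _ ≤ ENNReal.ofReal (64 * R ^ (3 - s)) := lintegral_ball_inv_le x R hR s hs1 hs2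
      _ < ⊤ := ENNReal.ofReal_lt_top

lemma setIntegral_inv_pow_le (x : E3) (R : ℝ) (hR : 0 < R) (s : ℕ) (hs1 : 1 ≤ s) (hs2 : s ≤ 2)
    (S : Set E3) (hS : S ⊆ ball x R) :
    ∫ y in S, ‖x - y‖⁻¹ ^ s ≤ 64 * R ^ (3 - s) := by
  rw [integral_eq_lintegral_of_nonneg_ae (Filter.Eventually.of_forall fun y => by positivity)
    (meas_inv_pow x s).aestronglyMeasurable]
  apply ENNReal.toReal_le_of_le_ofReal (by positivity)
  calc ∫⁻ y in S, ENNReal.ofReal (‖x - y‖⁻¹ ^ s) ∂volume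
      ≤ ∫⁻ y in ball x R, ENNReal.ofReal (‖x - y‖⁻¹ ^ s) ∂volume := lintegral_mono_set hS
    _ ≤ ENNReal.ofReal (64 * R ^ (3 - s)) := lintegral_ball_inv_le x R hR s hs1 hs2

section Boxes
variable (D : ℝ) (n : ℕ)

def idx {n : ℕ} (v : Fin (2*n) × Fin (2*n) × Fin (2*n)) : Fin 3 → ℕ := ![v.1, v.2.1, v.2.2]

/-- the half-open box with midpoint `midpt D n v`. -/
def boxx (v : Fin (2*n) × Fin (2*n) × Fin (2*n)) : Set E3 :=
  {y | ∀ i, y i ∈ Ico (((idx v i : ℕ) - (n:ℝ)) * (D/n)) (((idx v i : ℕ) - (n:ℝ)) * (D/n) + D/n)}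

def icocube : Set E3 := {y | ∀ i, y i ∈ Ico (-D) D}

variable {D n}

lemma midpt_apply (v) (i : Fin 3) :
    midpt D n v i = (((idx v i : ℕ) : ℝ) - n + 1/2) * (D/n) := by
  fin_cases i <;> rfl

lemma boxx_measurable (v) : MeasurableSet (boxx D n v) :=
  measurable_coordbox _ (fun i => measurableSet_Ico)

lemma icocube_measurable : MeasurableSet (icocube D) :=
  measurable_coordbox _ (fun i => measurableSet_Ico)

lemma vol_boxx (hD : 0 < D) (hn : 1 ≤ n) (v) :
    volume (boxx D n v) = ENNReal.ofReal ((D/n)^3) := by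
  have hh : 0 < D/n := by positivity
  rw [boxx, vol_coordbox _ (fun i => measurableSet_Ico)]
  simp only [Real.volume_Ico, add_sub_cancel_left]
  rw [Finset.prod_const, ← ENNReal.ofReal_pow hh.le]
  simp

lemma vol_icocube (hD : 0 < D) : volume (icocube D) = ENNReal.ofReal (8 * D^3) := by
  rw [icocube, vol_coordbox _ (fun i => measurableSet_Ico)]
  simp only [Real.volume_Ico, sub_neg_eq_add]
  rw [Finset.prod_const]
  rw [show D + D = 2*D by ring, ← ENNReal.ofReal_pow (by positivity)]
  simp only [Finset.card_univ, Fintype.card_fin]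
  congr 1
  ring

lemma boxx_subset_icocube (hD : 0 < D) (hn : 1 ≤ n) (v) : boxx D n v ⊆ icocube D := by
  have hh : 0 < D/n := by positivity
  have hn' : (0:ℝ) < n := by exact_mod_cast hn
  intro y hy i
  have h1 := (hy i).1
  have h2 := (hy i).2
  have hk : (idx v i : ℝ) < 2*n := by
    have : (idx v i : ℕ) < 2*n := (by
      show (idx v i : ℕ) < 2*n
      have : ∀ j : Fin 3, (idx v j : ℕ) < 2*n := by
        intro j
        fin_cases j
        · exact v.1.2
        · exact v.2.1.2
        · exact v.2.2.2
      exact this i)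
    exact_mod_cast this
  have hk0 : (0:ℝ) ≤ (idx v i : ℕ) := Nat.cast_nonneg _
  constructor
  · calc -D = (0 - (n:ℝ)) * (D/n) := by field_simp; ring
    _ ≤ ((idx v i : ℕ) - (n:ℝ)) * (D/n) := by
        apply mul_le_mul_of_nonneg_right _ hh.le
        linarith
    _ ≤ y i := h1
  · calc y i < ((idx v i : ℕ) - (n:ℝ)) * (D/n) + D/n := h2
    _ = ((idx v i : ℕ) + 1 - (n:ℝ)) * (D/n) := by ring
    _ ≤ ((2*n : ℝ) - n) * (D/n) := by
        apply mul_le_mul_of_nonneg_right _ hh.le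
        have : (idx v i : ℝ) + 1 ≤ 2*n := by
          have : (idx v i : ℕ) + 1 ≤ 2*n := by
            have : ∀ j : Fin 3, (idx v j : ℕ) < 2*n := by
              intro j; fin_cases j
              · exact v.1.2
              · exact v.2.1.2
              · exact v.2.2.2
            exact this i
          exact_mod_cast this
        linarith
    _ = D := by field_simp; ring

lemma dist_midpt_of_mem_boxx (hD : 0 < D) (hn : 1 ≤ n) (v) {y : E3} (hy : y ∈ boxx D n v) :
    ‖y - midpt D n v‖ ≤ Real.sqrt 3 * (D/n/2) := by
  apply norm_le_sqrt3
  intro i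
  have h1 := (hy i).1
  have h2 := (hy i).2
  have : (y - midpt D n v) i = y i - midpt D n v i := by
    simp [PiLp.sub_apply]
  rw [this, midpt_apply, abs_le]
  constructor
  · have : (((idx v i : ℕ) : ℝ) - n + 1/2) * (D/n) = ((idx v i : ℕ) - (n:ℝ)) * (D/n) + (D/n)/2 := by ring
    rw [this]; linarith
  · have : (((idx v i : ℕ) : ℝ) - n + 1/2) * (D/n) = ((idx v i : ℕ) - (n:ℝ)) * (D/n) + D/n - (D/n)/2 := by ring
    rw [this]; linarith

lemma idx_inj {n : ℕ} {v w : Fin (2*n) × Fin (2*n) × Fin (2*n)} (h : ∀ i, idx v i = idx w i) :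
    v = w := by
  have h0 := h 0; have h1 := h 1; have h2 := h 2
  simp only [idx] at h0 h1 h2
  ext
  · exact h0
  · exact h1
  · exact h2

lemma boxx_disjoint (hD : 0 < D) (hn : 1 ≤ n) :
    Pairwise (Function.onFun Disjoint (boxx D n)) := by
  have hh : 0 < D/n := by positivity
  intro v w hvw
  rw [Function.onFun, Set.disjoint_left]
  intro y hyv hyw
  apply hvw
  apply idx_inj
  intro i
  by_contra hne
  have h1v := (hyv i).1; have h2v := (hyv i).2
  have h1w := (hyw i).1; have h2w := (hyw i).2
  rcases Nat.lt_or_ge (idx v i) (idx w i) with hlt | hge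
  · have : ((idx v i : ℕ) : ℝ) + 1 ≤ ((idx w i : ℕ) : ℝ) := by exact_mod_cast hlt
    have : ((idx v i : ℕ) - (n:ℝ)) * (D/n) + D/n ≤ ((idx w i : ℕ) - (n:ℝ)) * (D/n) := by
      nlinarith
    linarith
  · have hlt : idx w i < idx v i := by omega
    have : ((idx w i : ℕ) : ℝ) + 1 ≤ ((idx v i : ℕ) : ℝ) := by exact_mod_cast hlt
    have : ((idx w i : ℕ) - (n:ℝ)) * (D/n) + D/n ≤ ((idx v i : ℕ) - (n:ℝ)) * (D/n) := by
      nlinarith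
    linarith

lemma iUnion_boxx (hD : 0 < D) (hn : 1 ≤ n) :
    ⋃ v, boxx D n v = icocube D := by
  have hn' : (0:ℝ) < n := by exact_mod_cast hn
  have hh : 0 < D/n := by positivity
  apply Set.Subset.antisymm
  · exact Set.iUnion_subset fun v => boxx_subset_icocube hD hn v
  intro y hy
  have hex : ∀ i : Fin 3, ∃ k : ℕ, k < 2*n ∧
      y i ∈ Ico (((k:ℕ) - (n:ℝ)) * (D/n)) (((k:ℕ) - (n:ℝ)) * (D/n) + D/n) := by
    intro i
    have h1 := (hy i).1
    have h2 := (hy i).2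
    set m : ℤ := ⌊y i / (D/n)⌋ with hm
    have hmlo : -(n:ℤ) ≤ m := by
      apply Int.le_floor.2
      push_cast
      rw [le_div_iff₀ hh]
      calc -(n:ℝ) * (D/n) = -D := by field_simp
      _ ≤ y i := h1
    have hmhi : m < n := by
      apply Int.floor_lt.2
      push_cast
      rw [div_lt_iff₀ hh]
      calc y i < D := h2
      _ = n * (D/n) := by field_simp
    refine ⟨(m + n).toNat, ?_, ?_, ?_⟩
    · omega
    · have hcast : (((m + n).toNat : ℕ) : ℝ) - n = (m:ℝ) := by
        have : ((m + n).toNat : ℤ) = m + n := Int.toNat_of_nonneg (by omega)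
        have := congrArg (fun z : ℤ => (z:ℝ)) this
        push_cast at this
        linarith
      rw [hcast]
      calc (m:ℝ) * (D/n) ≤ (y i / (D/n)) * (D/n) := by
            apply mul_le_mul_of_nonneg_right (Int.floor_le _) hh.le
      _ = y i := by field_simp
    · have hcast : (((m + n).toNat : ℕ) : ℝ) - n = (m:ℝ) := by
        have : ((m + n).toNat : ℤ) = m + n := Int.toNat_of_nonneg (by omega)
        have := congrArg (fun z : ℤ => (z:ℝ)) this
        push_cast at this
        linarith
      rw [hcast]
      have hfl : y i / (D/n) < m + 1 := Int.lt_floor_add_one _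
      calc y i = (y i/(D/n)) * (D/n) := by field_simp
      _ < ((m:ℝ) + 1) * (D/n) := by
          apply mul_lt_mul_of_pos_right hfl hh
      _ = (m:ℝ) * (D/n) + D/n := by ring
  choose K hK1 hK2 using hex
  refine Set.mem_iUnion.2 ⟨(⟨K 0, hK1 0⟩, ⟨K 1, hK1 1⟩, ⟨K 2, hK1 2⟩), ?_⟩
  intro i
  have hidx : (idx ((⟨K 0, hK1 0⟩, ⟨K 1, hK1 1⟩, ⟨K 2, hK1 2⟩) :
      Fin (2*n) × Fin (2*n) × Fin (2*n)) i : ℕ) = K i := by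
    fin_cases i <;> rfl
  rw [hidx]
  exact hK2 i

lemma icocube_ae_cube (hD : 0 < D) : icocube D =ᶠ[ae volume] cube D := by
  rw [Filter.eventuallyEq_set]
  have hnull : volume (cube D \ icocube D) = 0 := by
    have hsub : cube D \ icocube D ⊆ ⋃ i : Fin 3, {y : E3 | y i = D} := by
      rintro y ⟨hc, hnic⟩
      simp only [icocube, mem_setOf_eq, not_forall] at hnic
      obtain ⟨i, hi⟩ := hnic
      have h1 := (hc i).1
      have h2 := (hc i).2
      refine Set.mem_iUnion.2 ⟨i, ?_⟩
      simp only [mem_setOf_eq]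
      rw [Set.mem_Ico, not_and_or, not_le, not_lt] at hi
      rcases hi with h | h
      · linarith
      · linarith
    apply measure_mono_null hsub
    apply measure_iUnion_null
    intro i
    have heq : {y : E3 | y i = D} =
        (MeasurableEquiv.toLp 2 (Fin 3 → ℝ)).symm ⁻¹' {g : Fin 3 → ℝ | g i = D} := rfl
    have hmeas : MeasurableSet {g : Fin 3 → ℝ | g i = D} := by
      have h2 : {g : Fin 3 → ℝ | g i = D} = (fun g : Fin 3 → ℝ => g i) ⁻¹' {D} := rfl
      rw [h2]
      exact measurable_pi_apply i (measurableSet_singleton D)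
    rw [heq, (EuclideanSpace.volume_preserving_symm_measurableEquiv_toLp (Fin 3)).measure_preimage
      hmeas.nullMeasurableSet, MeasureTheory.volume_pi]
    exact Measure.pi_hyperplane (fun _ => (volume : Measure ℝ)) i D
  have hsub2 : icocube D ⊆ cube D := fun y hy i => ⟨(hy i).1, (hy i).2.le⟩
  filter_upwards [measure_eq_zero_iff_ae_notMem.mp hnull] with y hy
  constructor
  · intro h; exact hsub2 h
  · intro h
    by_contra hn
    exact hy ⟨h, hn⟩

end Boxes

lemma sqrt3_le_two : Real.sqrt 3 ≤ 2 := by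
  rw [show (2:ℝ) = Real.sqrt 4 from by
    rw [show (4:ℝ) = 2^2 by norm_num, Real.sqrt_sq (by norm_num)]]
  exact Real.sqrt_le_sqrt (by norm_num)

lemma one_le_sqrt3 : 1 ≤ Real.sqrt 3 := by
  rw [show (1:ℝ) = Real.sqrt 1 from (Real.sqrt_one).symm]
  exact Real.sqrt_le_sqrt (by norm_num)

lemma near_card {D : ℝ} (hD : 0 < D) {n : ℕ} (hn : 1 ≤ n) (x : E3) :
    (Finset.univ.filter (fun v : Fin (2*n) × Fin (2*n) × Fin (2*n) =>
      ‖x - midpt D n v‖ < Real.sqrt 3 * (D/n))).card ≤ 125 := by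
  classical
  have hn' : (0:ℝ) < n := by exact_mod_cast hn
  set h : ℝ := D/n with hhdef
  have hh : 0 < h := by positivity
  set t : Fin 3 → ℝ := fun i => x i / h + n - 1/2 with htdef
  set a : Fin 3 → ℤ := fun i => ⌊t i⌋ with hadef
  have hfl1 : ∀ i, (a i : ℝ) ≤ t i := fun i => Int.floor_le _
  have hfl2 : ∀ i, t i < a i + 1 := fun i => Int.lt_floor_add_one _
  have htmul : ∀ i, t i * h = x i + (n:ℝ)*h - h/2 := fun i => by
    rw [htdef]; field_simp
  clear_value t a
  set T : Finset (ℤ × ℤ × ℤ) :=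
    (Finset.Icc (a 0 - 2) (a 0 + 2)) ×ˢ ((Finset.Icc (a 1 - 2) (a 1 + 2)) ×ˢ
      (Finset.Icc (a 2 - 2) (a 2 + 2))) with hTdef
  have hTcard : T.card = 125 := by
    rw [hTdef, Finset.card_product, Finset.card_product, Int.card_Icc, Int.card_Icc, Int.card_Icc]
    have h5 : ∀ b : ℤ, (b + 2 + 1 - (b - 2)).toNat = 5 := fun b => by omega
    rw [h5, h5, h5]
  set F : Fin (2*n) × Fin (2*n) × Fin (2*n) → ℤ × ℤ × ℤ :=
    fun v => ((idx v 0 : ℤ), (idx v 1 : ℤ), (idx v 2 : ℤ)) with hFdef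
  have hmaps : ∀ v ∈ Finset.univ.filter (fun v : Fin (2*n) × Fin (2*n) × Fin (2*n) =>
      ‖x - midpt D n v‖ < Real.sqrt 3 * (D/n)), F v ∈ T := by
    intro v hv
    rw [Finset.mem_filter] at hv
    have hnear := hv.2
    have hkey : ∀ i : Fin 3, (idx v i : ℤ) ∈ Finset.Icc (a i - 2) (a i + 2) := by
      intro i
      have hcoord : |x i - midpt D n v i| < 2 * h := by
        have h1 : |(x - midpt D n v) i| ≤ ‖x - midpt D n v‖ := coord_le_norm _ i
        have h2 : (x - midpt D n v) i = x i - midpt D n v i := by simp [PiLp.sub_apply]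
        rw [h2] at h1
        calc |x i - midpt D n v i| ≤ ‖x - midpt D n v‖ := h1
        _ < Real.sqrt 3 * h := hnear
        _ ≤ 2 * h := by nlinarith [sqrt3_le_two]
      rw [midpt_apply, ← hhdef] at hcoord
      set k : ℝ := ((idx v i : ℕ) : ℝ) with hkdef
      rw [abs_lt] at hcoord
      have hxk : k * h = (k - (n:ℝ) + 1/2) * h + (n:ℝ)*h - h/2 := by ring
      have hup : k < t i + 2 := by
        have h1 : k * h < (t i + 2) * h := by nlinarith [hcoord.1, htmul i, hxk]
        exact lt_of_mul_lt_mul_right h1 hh.le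
      have hlo : t i - 2 < k := by
        have h1 : (t i - 2) * h < k * h := by nlinarith [hcoord.2, htmul i, hxk]
        exact lt_of_mul_lt_mul_right h1 hh.le
      rw [Finset.mem_Icc]
      constructor
      · have h1 : ((a i - 3 : ℤ) : ℝ) < ((idx v i : ℕ) : ℝ) := by
          push_cast
          have := hfl1 i
          rw [hkdef] at hlo
          linarith
        have h2 : (a i - 3 : ℤ) < (idx v i : ℤ) := by exact_mod_cast h1
        omega
      · have h1 : ((idx v i : ℕ) : ℝ) < ((a i + 3 : ℤ) : ℝ) := by
          push_cast
          have := hfl2 i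
          rw [hkdef] at hup
          linarith
        have h2 : (idx v i : ℤ) < a i + 3 := by exact_mod_cast h1
        omega
    rw [hTdef, hFdef]
    simp only [Finset.mem_product]
    exact ⟨hkey 0, hkey 1, hkey 2⟩
  have hinj : Set.InjOn F ↑(Finset.univ.filter (fun v : Fin (2*n) × Fin (2*n) × Fin (2*n) =>
      ‖x - midpt D n v‖ < Real.sqrt 3 * (D/n))) := by
    intro v _ w _ hvw
    rw [hFdef] at hvw
    simp only [Prod.mk.injEq] at hvw
    apply idx_inj
    intro i
    fin_cases i
    · exact_mod_cast hvw.1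
    · exact_mod_cast hvw.2.1
    · exact_mod_cast hvw.2.2
  calc _ ≤ T.card := Finset.card_le_card_of_injOn F hmaps hinj
  _ = 125 := hTcard

lemma meas_inv1 (x : E3) : Measurable (fun y : E3 => ‖x - y‖⁻¹) := by
  simpa using meas_inv_pow x 1

lemma integrableOn_inv1 (x : E3) (R : ℝ) (hR : 0 < R) (S : Set E3) (hS : S ⊆ ball x R) :
    IntegrableOn (fun y : E3 => ‖x - y‖⁻¹) S := by
  simpa using integrableOn_inv_pow x R hR 1 le_rfl one_le_two S hS

/-- H1: per-box error bound. -/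
lemma perbox {D : ℝ} (hD : 0 < D) {n : ℕ} (hn : 1 ≤ n)
    (A : E3 → ℝ) (MA K : ℝ) (hK : 0 ≤ K) (hMA : ∀ y, |A y| ≤ MA)
    (hLip : LipschitzWith (Real.toNNReal K) A)
    (x : E3) (v : Fin (2*n) × Fin (2*n) × Fin (2*n))
    (hr0 : 0 < ‖x - midpt D n v‖)
    (hf : IntegrableOn (fun y => A y / ‖x - y‖) (boxx D n v)) :
    |A (midpt D n v) * (D / n) ^ 3 / ‖x - midpt D n v‖
        - ∫ y in boxx D n v, A y / ‖x - y‖|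
      ≤ (K * (Real.sqrt 3 * (D/n/2)) + MA * (Real.sqrt 3 * (D/n/2)) / ‖x - midpt D n v‖)
          * ∫ y in boxx D n v, ‖x - y‖⁻¹ := by
  set p := midpt D n v with hp
  set r := ‖x - p‖ with hrdef
  set δ := Real.sqrt 3 * (D/n/2) with hδdef
  have hδ0 : 0 < δ := by
    have : (0:ℝ) < Real.sqrt 3 := Real.sqrt_pos.2 (by norm_num)
    have hh : (0:ℝ) < D/n/2 := by
      have : (0:ℝ) < (n:ℝ) := by exact_mod_cast hn
      positivity
    positivity
  have hMA0 : 0 ≤ MA := (abs_nonneg _).trans (hMA 0)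
  have hvol : (volume (boxx D n v)).toReal = (D/n)^3 := by
    rw [vol_boxx hD hn v, ENNReal.toReal_ofReal]
    have : (0:ℝ) < (n:ℝ) := by exact_mod_cast hn
    positivity
  have hvolfin : volume (boxx D n v) < ⊤ := by
    rw [vol_boxx hD hn v]; exact ENNReal.ofReal_lt_top
  -- boxx ⊆ ball x (r + 2δ)
  have hboxball : boxx D n v ⊆ ball x (r + 2*δ) := by
    intro y hy
    rw [mem_ball, dist_eq_norm]
    calc ‖y - x‖ = ‖(y - p) - (x - p)‖ := by congr 1; abel
    _ ≤ ‖y - p‖ + ‖x - p‖ := norm_sub_le _ _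
    _ ≤ δ + r := by
        have := dist_midpt_of_mem_boxx hD hn v hy
        rw [← hδdef] at this
        linarith
    _ < r + 2*δ := by linarith
  have hIint : IntegrableOn (fun y : E3 => ‖x - y‖⁻¹) (boxx D n v) :=
    integrableOn_inv1 x (r + 2*δ) (by linarith) _ hboxball
  have hconst : IntegrableOn (fun _y : E3 => A p / r) (boxx D n v) :=
    integrableOn_const hvolfin.ne
  -- rewrite the Riemann term as an integral
  have hterm : A p * (D/n)^3 / r = ∫ _y in boxx D n v, A p / r := by
    rw [setIntegral_const, measureReal_def, hvol, smul_eq_mul]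
    ring
  rw [hterm, ← integral_sub hconst hf]
  -- pointwise ae bound
  have hne : ∀ᵐ (y : E3) ∂volume, y ≠ x := by
    have h0 : volume ({y : E3 | ¬ y ≠ x}) = 0 := by
      have : {y : E3 | ¬ y ≠ x} = {x} := by ext y; simp [eq_comm]
      rw [this]; exact measure_singleton x
    exact ae_iff.2 h0
  have hae : ∀ᵐ y ∂(volume.restrict (boxx D n v)),
      |A p / r - A y / ‖x - y‖| ≤ (K * δ + MA * δ / r) * ‖x - y‖⁻¹ := by
    filter_upwards [ae_restrict_of_ae hne, ae_restrict_mem (boxx_measurable v)] with y hyne hymem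
    set d := ‖x - y‖ with hddef
    have hd0 : 0 < d := by
      rw [hddef, norm_pos_iff, sub_ne_zero]
      exact fun h => hyne h.symm
    have hpy : ‖y - p‖ ≤ δ := by
      have := dist_midpt_of_mem_boxx hD hn v hymem
      rw [← hδdef] at this; exact this
    have hlip : |A p - A y| ≤ K * δ := by
      have h1 := hLip.dist_le_mul p y
      rw [Real.dist_eq, dist_eq_norm] at h1
      have h2 : (Real.toNNReal K : ℝ) = K := Real.coe_toNNReal K hK
      rw [h2] at h1
      calc |A p - A y| ≤ K * ‖p - y‖ := h1
      _ = K * ‖y - p‖ := by rw [norm_sub_rev]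
      _ ≤ K * δ := by nlinarith
    have hdr : |d - r| ≤ δ := by
      calc |d - r| = |‖x - y‖ - ‖x - p‖| := rfl
      _ ≤ ‖(x - y) - (x - p)‖ := abs_norm_sub_norm_le _ _
      _ = ‖p - y‖ := by congr 1; abel
      _ = ‖y - p‖ := by rw [norm_sub_rev]
      _ ≤ δ := hpy
    have hdecomp : A p / r - A y / d = (A p - A y)/d + A p * (1/r - 1/d) := by
      field_simp
      ring
    rw [hdecomp]
    calc |(A p - A y)/d + A p * (1/r - 1/d)|
        ≤ |(A p - A y)/d| + |A p * (1/r - 1/d)| := abs_add_le _ _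
      _ = |A p - A y|/d + |A p| * |1/r - 1/d| := by
          rw [abs_div, abs_mul, abs_of_pos hd0]
      _ ≤ (K * δ)/d + MA * (δ/(r*d)) := by
          apply add_le_add
          · gcongr
          · apply mul_le_mul (hMA p) _ (abs_nonneg _) hMA0
            have h1 : 1/r - 1/d = (d - r)/(r*d) := by field_simp
            rw [h1, abs_div, abs_of_pos (by positivity : (0:ℝ) < r*d)]
            gcongr
      _ = (K * δ + MA * δ / r) * d⁻¹ := by field_simp
  calc |∫ y in boxx D n v, (A p / r - A y / ‖x - y‖)|
      ≤ ∫ y in boxx D n v, |A p / r - A y / ‖x - y‖| := by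
        have := norm_integral_le_integral_norm (μ := volume.restrict (boxx D n v))
          (fun y => A p / r - A y / ‖x - y‖)
        simpa [Real.norm_eq_abs] using this
    _ ≤ ∫ y in boxx D n v, (K * δ + MA * δ / r) * ‖x - y‖⁻¹ := by
        apply integral_mono_ae ((hconst.sub hf).abs) (hIint.const_mul _) hae
    _ = (K * δ + MA * δ / r) * ∫ y in boxx D n v, ‖x - y‖⁻¹ := by
        rw [integral_const_mul]

lemma inv_pow_nonneg (x : E3) (s : ℕ) (y : E3) : 0 ≤ ‖x - y‖⁻¹ ^ s := by positivity

/-- H2a: integrability over the Ico-cube. -/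
lemma integrableOn_inv_pow_icocube (x : E3) {D : ℝ} (hD : 0 < D) (s : ℕ) (hs1 : 1 ≤ s)
    (hs2 : s ≤ 2) : IntegrableOn (fun y : E3 => ‖x - y‖⁻¹ ^ s) (icocube D) := by
  have h1 : IntegrableOn (fun y : E3 => ‖x - y‖⁻¹ ^ s) (icocube D ∩ ball x D) :=
    (integrableOn_inv_pow x D hD s hs1 hs2 (ball x D) subset_rfl).mono_set
      inter_subset_right
  have h2 : IntegrableOn (fun y : E3 => ‖x - y‖⁻¹ ^ s) (icocube D \ ball x D) := by
    apply Integrable.mono' (g := fun _y : E3 => (D⁻¹)^s)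
    · refine integrableOn_const (ne_of_lt ?_)
      calc volume (icocube D \ ball x D) ≤ volume (icocube D) := measure_mono diff_subset
      _ < ⊤ := by rw [vol_icocube hD]; exact ENNReal.ofReal_lt_top
    · exact (meas_inv_pow x s).aestronglyMeasurable
    · filter_upwards [ae_restrict_mem (icocube_measurable.diff measurableSet_ball)] with y hy
      rw [Real.norm_eq_abs, abs_of_nonneg (inv_pow_nonneg x s y)]
      apply pow_le_pow_left₀ (by positivity)
      apply inv_anti₀ hD
      have : ¬ (y ∈ ball x D) := hy.2
      rw [mem_ball, dist_eq_norm, norm_sub_rev, not_lt] at this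
      exact this
  have h3 := h1.union h2
  rwa [inter_union_diff] at h3
/-- H2: integral bound over the Ico-cube. -/
lemma setIntegral_inv_pow_icocube_le (x : E3) {D : ℝ} (hD : 0 < D) (s : ℕ) (hs1 : 1 ≤ s)
    (hs2 : s ≤ 2) : ∫ y in icocube D, ‖x - y‖⁻¹ ^ s ≤ 72 * D ^ (3 - s) := by
  have h1 : IntegrableOn (fun y : E3 => ‖x - y‖⁻¹ ^ s) (icocube D ∩ ball x D) :=
    (integrableOn_inv_pow x D hD s hs1 hs2 (ball x D) subset_rfl).mono_set inter_subset_right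
  have h2 : IntegrableOn (fun y : E3 => ‖x - y‖⁻¹ ^ s) (icocube D \ ball x D) :=
    (integrableOn_inv_pow_icocube x hD s hs1 hs2).mono_set diff_subset
  have hsplit : ∫ y in icocube D, ‖x - y‖⁻¹ ^ s
      = (∫ y in icocube D ∩ ball x D, ‖x - y‖⁻¹ ^ s)
        + ∫ y in icocube D \ ball x D, ‖x - y‖⁻¹ ^ s := by
    rw [← setIntegral_union (Disjoint.mono_left inter_subset_right disjoint_sdiff_right)
      (icocube_measurable.diff measurableSet_ball) h1 h2, inter_union_diff]
  rw [hsplit]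
  have hA : ∫ y in icocube D ∩ ball x D, ‖x - y‖⁻¹ ^ s ≤ 64 * D ^ (3 - s) :=
    setIntegral_inv_pow_le x D hD s hs1 hs2 _ inter_subset_right
  have hB : ∫ y in icocube D \ ball x D, ‖x - y‖⁻¹ ^ s ≤ 8 * D ^ (3 - s) := by
    calc ∫ y in icocube D \ ball x D, ‖x - y‖⁻¹ ^ s
        ≤ ∫ _y in icocube D \ ball x D, (D⁻¹)^s := by
          apply setIntegral_mono_on h2
            (integrableOn_const (lt_of_le_of_lt (measure_mono diff_subset)
              (by rw [vol_icocube hD]; exact ENNReal.ofReal_lt_top)).ne)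
            (icocube_measurable.diff measurableSet_ball)
          intro y hy
          apply pow_le_pow_left₀ (by positivity)
          apply inv_anti₀ hD
          have : ¬ (y ∈ ball x D) := hy.2
          rw [mem_ball, dist_eq_norm, norm_sub_rev, not_lt] at this
          exact this
      _ = (volume (icocube D \ ball x D)).toReal * (D⁻¹)^s := by
          rw [setIntegral_const, measureReal_def, smul_eq_mul]
      _ ≤ 8 * D^3 * (D⁻¹)^s := by
          apply mul_le_mul_of_nonneg_right _ (by positivity)
          calc (volume (icocube D \ ball x D)).toReal
              ≤ (volume (icocube D)).toReal := by
                apply ENNReal.toReal_mono _ (measure_mono diff_subset)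
                rw [vol_icocube hD]; exact ENNReal.ofReal_ne_top
            _ = 8 * D^3 := by rw [vol_icocube hD, ENNReal.toReal_ofReal (by positivity)]
      _ = 8 * D ^ (3 - s) := by
          interval_cases s
          · have : (3:ℕ) - 1 = 2 := by norm_num
            rw [this]; field_simp
          · have : (3:ℕ) - 2 = 1 := by norm_num
            rw [this]; field_simp
  linarith

/-- far-box estimate. -/
lemma farbox {D : ℝ} (hD : 0 < D) {n : ℕ} (hn : 1 ≤ n)
    (A : E3 → ℝ) (MA K : ℝ) (hK : 0 ≤ K) (hMA : ∀ y, |A y| ≤ MA)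
    (hLip : LipschitzWith (Real.toNNReal K) A)
    (x : E3) (v : Fin (2*n) × Fin (2*n) × Fin (2*n))
    (hfar : Real.sqrt 3 * (D/n) ≤ ‖x - midpt D n v‖)
    (hf : IntegrableOn (fun y => A y / ‖x - y‖) (boxx D n v)) :
    |A (midpt D n v) * (D / n) ^ 3 / ‖x - midpt D n v‖
        - ∫ y in boxx D n v, A y / ‖x - y‖|
      ≤ 3 * K * (Real.sqrt 3 * (D/n/2)) * (∫ y in boxx D n v, ‖x - y‖⁻¹ ^ 1)
        + (9/2) * MA * (Real.sqrt 3 * (D/n/2)) * (∫ y in boxx D n v, ‖x - y‖⁻¹ ^ 2) := by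
  have hn' : (0:ℝ) < n := by exact_mod_cast hn
  have hh : (0:ℝ) < D/n := by positivity
  set p := midpt D n v with hp
  set r := ‖x - p‖ with hrdef
  set δ := Real.sqrt 3 * (D/n/2) with hδdef
  have hδ0 : 0 < δ := by
    have h3 : (0:ℝ) < Real.sqrt 3 := lt_of_lt_of_le one_pos one_le_sqrt3
    positivity
  have h2δ : 2 * δ = Real.sqrt 3 * (D/n) := by rw [hδdef]; ring
  have hr0 : 0 < r := lt_of_lt_of_le (by rw [← h2δ]; positivity) hfar
  have hδr : 2 * δ ≤ r := by rw [h2δ]; exact hfar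
  have hMA0 : 0 ≤ MA := (abs_nonneg _).trans (hMA 0)
  have hvol : (volume (boxx D n v)).toReal = (D/n)^3 := by
    rw [vol_boxx hD hn v, ENNReal.toReal_ofReal (by positivity)]
  have hvolfin : volume (boxx D n v) < ⊤ := by
    rw [vol_boxx hD hn v]; exact ENNReal.ofReal_lt_top
  -- bounds on ‖x - y‖ on the box
  have hdlb : ∀ y ∈ boxx D n v, r/2 ≤ ‖x - y‖ := by
    intro y hy
    have h1 : ‖y - p‖ ≤ δ := by
      have := dist_midpt_of_mem_boxx hD hn v hy
      rw [← hδdef] at this; exact this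
    have h2 : r ≤ ‖x - y‖ + ‖y - p‖ := by
      calc r = ‖(x - y) + (y - p)‖ := by rw [hrdef]; congr 1; abel
      _ ≤ ‖x - y‖ + ‖y - p‖ := norm_add_le _ _
    linarith
  have hdub : ∀ y ∈ boxx D n v, ‖x - y‖ ≤ (3/2) * r := by
    intro y hy
    have h1 : ‖y - p‖ ≤ δ := by
      have := dist_midpt_of_mem_boxx hD hn v hy
      rw [← hδdef] at this; exact this
    have h2 : ‖x - y‖ ≤ r + ‖y - p‖ := by
      calc ‖x - y‖ = ‖(x - p) - (y - p)‖ := by congr 1; abel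
      _ ≤ ‖x - p‖ + ‖y - p‖ := norm_sub_le _ _
    linarith
  have hboxball : boxx D n v ⊆ ball x (2*r) := by
    intro y hy
    rw [mem_ball, dist_eq_norm, norm_sub_rev]
    calc ‖x - y‖ ≤ (3/2)*r := hdub y hy
    _ < 2*r := by linarith
  have hIs : ∀ s : ℕ, 1 ≤ s → s ≤ 2 → IntegrableOn (fun y : E3 => ‖x - y‖⁻¹ ^ s) (boxx D n v) :=
    fun s hs1 hs2 => integrableOn_inv_pow x (2*r) (by linarith) s hs1 hs2 _ hboxball
  have hI1 : IntegrableOn (fun y : E3 => ‖x - y‖⁻¹) (boxx D n v) := by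
    simpa using hIs 1 le_rfl one_le_two
  -- upper bound for I
  have hIub : ∫ y in boxx D n v, ‖x - y‖⁻¹ ≤ (2/r) * (D/n)^3 := by
    calc ∫ y in boxx D n v, ‖x - y‖⁻¹ ≤ ∫ _y in boxx D n v, 2/r := by
          apply setIntegral_mono_on hI1 (integrableOn_const hvolfin.ne)
            (boxx_measurable v)
          intro y hy
          have h1 := hdlb y hy
          calc ‖x - y‖⁻¹ ≤ (r/2)⁻¹ := by
                apply inv_anti₀ (by positivity) h1
          _ = 2/r := by rw [inv_div]
      _ = (2/r) * (D/n)^3 := by rw [setIntegral_const, measureReal_def, hvol, smul_eq_mul]; ring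
  -- lower bounds for J_s
  have hJlb : ∀ s : ℕ, 1 ≤ s → s ≤ 2 →
      (D/n)^3 * ((2/3)/r)^s ≤ ∫ y in boxx D n v, ‖x - y‖⁻¹ ^ s := by
    intro s hs1 hs2
    calc (D/n)^3 * ((2/3)/r)^s = ∫ _y in boxx D n v, ((2/3)/r)^s := by
          rw [setIntegral_const, measureReal_def, hvol, smul_eq_mul]
      _ ≤ ∫ y in boxx D n v, ‖x - y‖⁻¹ ^ s := by
          apply setIntegral_mono_on (integrableOn_const hvolfin.ne) (hIs s hs1 hs2)
            (boxx_measurable v)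
          intro y hy
          apply pow_le_pow_left₀ (by positivity)
          have h1 := hdub y hy
          have h2 : (0:ℝ) < ‖x - y‖ := lt_of_lt_of_le (by positivity) (hdlb y hy)
          calc (2/3)/r = ((3/2)*r)⁻¹ := by
                rw [mul_inv]
                norm_num
                rw [div_eq_mul_inv]
          _ ≤ ‖x - y‖⁻¹ := inv_anti₀ h2 h1
  have hJ1 : (D/n)^3 / r ≤ (3/2) * ∫ y in boxx D n v, ‖x - y‖⁻¹ ^ 1 := by
    have := hJlb 1 le_rfl one_le_two
    have h2 : (D/n)^3 * ((2/3)/r)^1 = (2/3) * ((D/n)^3 / r) := by field_simp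
    rw [h2] at this
    linarith
  have hJ2 : (D/n)^3 / r^2 ≤ (9/4) * ∫ y in boxx D n v, ‖x - y‖⁻¹ ^ 2 := by
    have := hJlb 2 one_le_two le_rfl
    have h2 : (D/n)^3 * ((2/3)/r)^2 = (4/9) * ((D/n)^3 / r^2) := by field_simp; ring
    rw [h2] at this
    linarith
  -- combine
  have hmain := perbox hD hn A MA K hK hMA hLip x v hr0 hf
  rw [← hp, ← hrdef, ← hδdef] at hmain
  have hInn : 0 ≤ ∫ y in boxx D n v, ‖x - y‖⁻¹ :=
    setIntegral_nonneg (boxx_measurable v) (fun y _ => by positivity)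
  calc |A p * (D / n) ^ 3 / r - ∫ y in boxx D n v, A y / ‖x - y‖|
      ≤ (K * δ + MA * δ / r) * ∫ y in boxx D n v, ‖x - y‖⁻¹ := hmain
    _ ≤ (K * δ + MA * δ / r) * ((2/r) * (D/n)^3) := by
        apply mul_le_mul_of_nonneg_left hIub
        positivity
    _ = 2*K*δ*((D/n)^3/r) + 2*MA*δ*((D/n)^3/r^2) := by field_simp
    _ ≤ 2*K*δ*((3/2) * ∫ y in boxx D n v, ‖x - y‖⁻¹ ^ 1)
        + 2*MA*δ*((9/4) * ∫ y in boxx D n v, ‖x - y‖⁻¹ ^ 2) := by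
        apply add_le_add
        · apply mul_le_mul_of_nonneg_left hJ1; positivity
        · apply mul_le_mul_of_nonneg_left hJ2; positivity
    _ = 3 * K * δ * (∫ y in boxx D n v, ‖x - y‖⁻¹ ^ 1)
        + (9/2) * MA * δ * (∫ y in boxx D n v, ‖x - y‖⁻¹ ^ 2) := by ring

set_option maxHeartbeats 1000000

/-- Let `A` be a Lipschitz function supported in `[-D,D]³`, with sup-norm at most `MA`
and Lipschitz constant `K`. There is a universal constant `C` such that for all
`n ≥ 1` and all `x` outside `∪_i B(p_{i,n}, D/n²)`, the weighted Riemann sum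
`∑_i A(p_{i,n})(D/n)³/|x − p_{i,n}|` differs from `∫ A(y)/|x−y| dy` by at most
`(C/n)(MA·D² + K·D³)`. -/
theorem stmt4 :
    ∃ C : ℝ, 0 < C ∧ ∀ D : ℝ, 0 < D →
      ∀ (A : EuclideanSpace ℝ (Fin 3) → ℝ) (MA K : ℝ), 0 ≤ K →
        (∀ y, |A y| ≤ MA) →
        LipschitzWith (Real.toNNReal K) A →
        (∀ y, y ∉ cube D → A y = 0) →
        ∀ n : ℕ, 1 ≤ n →
          ∀ x : EuclideanSpace ℝ (Fin 3),
            (∀ v : Fin (2 * n) × Fin (2 * n) × Fin (2 * n),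
              x ∉ Metric.ball (midpt D n v) (D / (n : ℝ) ^ 2)) →
            |(∑ v : Fin (2 * n) × Fin (2 * n) × Fin (2 * n),
                A (midpt D n v) * (D / n) ^ 3 / ‖x - midpt D n v‖)
                - ∫ y in cube D, A y / ‖x - y‖|
              ≤ (C / n) * (MA * D ^ 2 + K * D ^ 3) := by
  classical
  refine ⟨100000, by norm_num, ?_⟩
  intro D hD A MA K hK hMA hLip hsupp n hn x hx
  have hn' : (0:ℝ) < n := by exact_mod_cast hn
  have hh : (0:ℝ) < D/n := by positivity
  have hs3 : (0:ℝ) < Real.sqrt 3 := lt_of_lt_of_le one_pos one_le_sqrt3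
  set δ : ℝ := Real.sqrt 3 * (D/n/2) with hδdef
  have hδ0 : 0 < δ := by positivity
  have hδh : δ ≤ D/n := by nlinarith [sqrt3_le_two]
  have hMA0 : 0 ≤ MA := (abs_nonneg _).trans (hMA 0)
  have hxp : ∀ v, D/(n:ℝ)^2 ≤ ‖x - midpt D n v‖ := by
    intro v
    have h1 := hx v
    rw [mem_ball, dist_eq_norm] at h1
    push_neg at h1
    exact h1
  have hrpos : ∀ v, (0:ℝ) < ‖x - midpt D n v‖ := fun v =>
    lt_of_lt_of_le (by positivity) (hxp v)
  -- integrability of the full integrand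
  set f : E3 → ℝ := fun y => A y / ‖x - y‖ with hfdef
  have hfmeas : Measurable f :=
    (hLip.continuous.measurable).div ((continuous_const.sub continuous_id).norm.measurable)
  have hIico : IntegrableOn (fun y : E3 => ‖x - y‖⁻¹) (icocube D) := by
    simpa using integrableOn_inv_pow_icocube x hD 1 le_rfl one_le_two
  have hfint : IntegrableOn f (icocube D) := by
    apply Integrable.mono' (hIico.const_mul MA) hfmeas.aestronglyMeasurable
    apply Filter.Eventually.of_forall
    intro y
    rw [Real.norm_eq_abs, hfdef]
    simp only
    rw [abs_div, abs_of_nonneg (norm_nonneg _)]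
    rcases eq_or_lt_of_le (norm_nonneg (x - y)) with h0 | h0
    · rw [← h0]; simp
    · rw [div_eq_mul_inv]
      exact mul_le_mul_of_nonneg_right (hMA y) (by positivity)
  have hfintbox : ∀ v, IntegrableOn f (boxx D n v) := fun v =>
    hfint.mono_set (boxx_subset_icocube hD hn v)
  -- the integral decomposes as a sum over boxes
  have hcube : ∫ y in cube D, f y = ∑ v, ∫ y in boxx D n v, f y := by
    rw [← setIntegral_congr_set (icocube_ae_cube hD), ← iUnion_boxx hD hn]
    have h1 : (⋃ v, boxx D n v) = ⋃ v ∈ Finset.univ, boxx D n v := by simp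
    rw [h1, integral_biUnion_finset Finset.univ (fun v _ => boxx_measurable v)
      ((boxx_disjoint hD hn).set_pairwise _) (fun v _ => hfintbox v)]
  -- bound the total error by the sum of box errors
  set T : Fin (2*n) × Fin (2*n) × Fin (2*n) → ℝ := fun v =>
    A (midpt D n v) * (D / n) ^ 3 / ‖x - midpt D n v‖ - ∫ y in boxx D n v, f y with hTdef
  have hsplit : |(∑ v, A (midpt D n v) * (D / n) ^ 3 / ‖x - midpt D n v‖)
      - ∫ y in cube D, A y / ‖x - y‖| = |∑ v, T v| := by
    rw [hcube, ← Finset.sum_sub_distrib]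
  rw [hsplit]
  set P : Fin (2*n) × Fin (2*n) × Fin (2*n) → Prop := fun v =>
    ‖x - midpt D n v‖ < Real.sqrt 3 * (D/n) with hPdef
  -- near boxes
  have hnear : ∀ v ∈ Finset.univ.filter (fun v => P v),
      |T v| ≤ (768 / n) * (MA * D^2 + K * D^3) := by
    intro v hv
    rw [Finset.mem_filter] at hv
    have hPv := hv.2
    set r := ‖x - midpt D n v‖ with hrdef
    have hr0 : 0 < r := hrpos v
    have hbb : boxx D n v ⊆ ball x (2 * Real.sqrt 3 * (D/n)) := by
      intro y hy
      rw [mem_ball, dist_eq_norm, norm_sub_rev]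
      have h1 : ‖y - midpt D n v‖ ≤ δ := by
        have := dist_midpt_of_mem_boxx hD hn v hy
        rw [← hδdef] at this; exact this
      have h2 : ‖x - y‖ ≤ r + δ := by
        calc ‖x - y‖ = ‖(x - midpt D n v) - (y - midpt D n v)‖ := by congr 1; abel
        _ ≤ r + ‖y - midpt D n v‖ := norm_sub_le _ _
        _ ≤ r + δ := by linarith
      have h3 : δ ≤ Real.sqrt 3 * (D/n) / 2 := by rw [hδdef]; ring_nf; linarith [hδ0]
      calc ‖x - y‖ ≤ r + δ := h2
      _ < Real.sqrt 3 * (D/n) + Real.sqrt 3 * (D/n) / 2 := by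
          apply add_lt_add_of_lt_of_le hPv h3
      _ ≤ 2 * Real.sqrt 3 * (D/n) := by nlinarith
    have hIub : ∫ y in boxx D n v, ‖x - y‖⁻¹ ≤ 768 * (D/n)^2 := by
      have h1 := setIntegral_inv_pow_le x (2 * Real.sqrt 3 * (D/n))
        (by positivity) 1 le_rfl one_le_two _ hbb
      have h2 : (64:ℝ) * (2 * Real.sqrt 3 * (D/n)) ^ (3-1) ≤ 768 * (D/n)^2 := by
        have hsq : (Real.sqrt 3)^2 = 3 := Real.sq_sqrt (by norm_num)
        have h3 : (3:ℕ) - 1 = 2 := by norm_num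
        rw [h3]
        nlinarith [sq_nonneg (D/n)]
      calc ∫ y in boxx D n v, ‖x - y‖⁻¹ = ∫ y in boxx D n v, ‖x - y‖⁻¹ ^ 1 := by simp
      _ ≤ 64 * (2 * Real.sqrt 3 * (D/n)) ^ (3-1) := h1
      _ ≤ 768 * (D/n)^2 := h2
    have hIlb : 0 ≤ ∫ y in boxx D n v, ‖x - y‖⁻¹ :=
      setIntegral_nonneg (boxx_measurable v) (fun y _ => by positivity)
    have hpb := perbox hD hn A MA K hK hMA hLip x v hr0 (hfintbox v)
    rw [← hδdef, ← hrdef] at hpb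
    calc |T v| ≤ (K * δ + MA * δ / r) * ∫ y in boxx D n v, ‖x - y‖⁻¹ := hpb
      _ ≤ (K * δ + MA * δ / r) * (768 * (D/n)^2) := by
          apply mul_le_mul_of_nonneg_left hIub
          positivity
      _ ≤ (K * (D/n) + MA * (D/n) * (n^2/D)) * (768 * (D/n)^2) := by
          apply mul_le_mul_of_nonneg_right _ (by positivity)
          apply add_le_add
          · nlinarith
          · have h1 : MA * δ / r ≤ MA * δ / (D/(n:ℝ)^2) := by
              apply div_le_div_of_nonneg_left (by positivity) (by positivity) (hxp v)
            calc MA * δ / r ≤ MA * δ / (D/(n:ℝ)^2) := h1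
            _ = MA * δ * (n^2/D) := by field_simp
            _ ≤ MA * (D/n) * (n^2/D) := by
                apply mul_le_mul_of_nonneg_right _ (by positivity)
                nlinarith
      _ = 768 * K * D^3 / n^3 + 768 * MA * D^2 / n := by field_simp
      _ ≤ (768 / n) * (MA * D^2 + K * D^3) := by
          have h1 : 768 * K * D^3 / n^3 ≤ 768 * K * D^3 / n := by
            apply div_le_div_of_nonneg_left (by positivity) (by positivity)
            have h1n : (1:ℝ) ≤ (n:ℝ) := by exact_mod_cast hn
            nlinarith [sq_nonneg ((n:ℝ) - 1), sq_nonneg ((n:ℝ) + 1)]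
          have h2 : (768 / (n:ℝ)) * (MA * D^2 + K * D^3)
              = 768 * MA * D^2 / n + 768 * K * D^3 / n := by ring
          linarith
  -- far boxes
  have hfarbd : ∀ v ∈ Finset.univ.filter (fun v => ¬ P v),
      |T v| ≤ 3 * K * δ * (∫ y in boxx D n v, ‖x - y‖⁻¹ ^ 1)
        + (9/2) * MA * δ * (∫ y in boxx D n v, ‖x - y‖⁻¹ ^ 2) := by
    intro v hv
    rw [Finset.mem_filter] at hv
    have hPv : Real.sqrt 3 * (D/n) ≤ ‖x - midpt D n v‖ := not_lt.mp hv.2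
    have := farbox hD hn A MA K hK hMA hLip x v hPv (hfintbox v)
    rw [← hδdef] at this
    exact this
  have hsumJ : ∀ s : ℕ, 1 ≤ s → s ≤ 2 →
      ∑ v ∈ Finset.univ.filter (fun v => ¬ P v), ∫ y in boxx D n v, ‖x - y‖⁻¹ ^ s
        ≤ 72 * D ^ (3 - s) := by
    intro s hs1 hs2
    have hbi : ∑ v ∈ Finset.univ.filter (fun v => ¬ P v), ∫ y in boxx D n v, ‖x - y‖⁻¹ ^ s
        = ∫ y in ⋃ v ∈ Finset.univ.filter (fun v => ¬ P v), boxx D n v, ‖x - y‖⁻¹ ^ s := by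
      rw [integral_biUnion_finset _ (fun v _ => boxx_measurable v)
        ((boxx_disjoint hD hn).set_pairwise _)
        (fun v _ => (integrableOn_inv_pow_icocube x hD s hs1 hs2).mono_set
          (boxx_subset_icocube hD hn v))]
    rw [hbi]
    calc ∫ y in ⋃ v ∈ Finset.univ.filter (fun v => ¬ P v), boxx D n v, ‖x - y‖⁻¹ ^ s
        ≤ ∫ y in icocube D, ‖x - y‖⁻¹ ^ s := by
          apply setIntegral_mono_set (integrableOn_inv_pow_icocube x hD s hs1 hs2)
            (Filter.Eventually.of_forall (fun y => by positivity))
          apply HasSubset.Subset.eventuallyLE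
          apply Set.iUnion₂_subset
          intro v _
          exact boxx_subset_icocube hD hn v
      _ ≤ 72 * D ^ (3 - s) := setIntegral_inv_pow_icocube_le x hD s hs1 hs2
  have hfartot : ∑ v ∈ Finset.univ.filter (fun v => ¬ P v), |T v|
      ≤ (324 / n) * (MA * D^2 + K * D^3) := by
    have hJnn : ∀ (s : ℕ) v, 0 ≤ ∫ y in boxx D n v, ‖x - y‖⁻¹ ^ s := fun s v =>
      setIntegral_nonneg (boxx_measurable v) (fun y _ => by positivity)
    calc ∑ v ∈ Finset.univ.filter (fun v => ¬ P v), |T v|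
        ≤ ∑ v ∈ Finset.univ.filter (fun v => ¬ P v),
            (3 * K * δ * (∫ y in boxx D n v, ‖x - y‖⁻¹ ^ 1)
              + (9/2) * MA * δ * (∫ y in boxx D n v, ‖x - y‖⁻¹ ^ 2)) :=
          Finset.sum_le_sum hfarbd
      _ = 3 * K * δ * (∑ v ∈ Finset.univ.filter (fun v => ¬ P v),
              ∫ y in boxx D n v, ‖x - y‖⁻¹ ^ 1)
          + (9/2) * MA * δ * (∑ v ∈ Finset.univ.filter (fun v => ¬ P v),
              ∫ y in boxx D n v, ‖x - y‖⁻¹ ^ 2) := by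
          rw [Finset.sum_add_distrib, Finset.mul_sum, Finset.mul_sum]
      _ ≤ 3 * K * δ * (72 * D^2) + (9/2) * MA * δ * (72 * D) := by
          apply add_le_add
          · apply mul_le_mul_of_nonneg_left _ (by positivity)
            have := hsumJ 1 le_rfl one_le_two
            norm_num at this ⊢
            exact this
          · apply mul_le_mul_of_nonneg_left _ (by positivity)
            have := hsumJ 2 one_le_two le_rfl
            norm_num at this ⊢
            exact this
      _ ≤ 3 * K * (D/n) * (72 * D^2) + (9/2) * MA * (D/n) * (72 * D) := by
          apply add_le_add
          · apply mul_le_mul_of_nonneg_right _ (by positivity)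
            apply mul_le_mul_of_nonneg_left hδh (by positivity)
          · apply mul_le_mul_of_nonneg_right _ (by positivity)
            apply mul_le_mul_of_nonneg_left hδh (by positivity)
      _ ≤ (324 / n) * (MA * D^2 + K * D^3) := by
          have h1 : 3 * K * (D/n) * (72 * D^2) = 216 * K * D^3 / n := by ring
          have h2 : (9/2) * MA * (D/n) * (72 * D) = 324 * MA * D^2 / n := by ring
          have h3 : (324 / (n:ℝ)) * (MA * D^2 + K * D^3)
              = 324 * MA * D^2 / n + 324 * K * D^3 / n := by ring
          have h4 : 216 * K * D^3 / (n:ℝ) ≤ 324 * K * D^3 / n := by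
            gcongr
            nlinarith
          linarith
  -- combine
  have hneartot : ∑ v ∈ Finset.univ.filter (fun v => P v), |T v|
      ≤ (96000 / n) * (MA * D^2 + K * D^3) := by
    calc ∑ v ∈ Finset.univ.filter (fun v => P v), |T v|
        ≤ (Finset.univ.filter (fun v => P v)).card • ((768 / n) * (MA * D^2 + K * D^3)) :=
          Finset.sum_le_card_nsmul _ _ _ hnear
      _ = ((Finset.univ.filter (fun v => P v)).card : ℝ) * ((768 / n) * (MA * D^2 + K * D^3)) := by
          rw [nsmul_eq_mul]
      _ ≤ 125 * ((768 / n) * (MA * D^2 + K * D^3)) := by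
          apply mul_le_mul_of_nonneg_right _ (by positivity)
          exact_mod_cast near_card hD hn x
      _ = (96000 / n) * (MA * D^2 + K * D^3) := by ring
  calc |∑ v, T v| ≤ ∑ v, |T v| := Finset.abs_sum_le_sum_abs _ _
    _ = (∑ v ∈ Finset.univ.filter (fun v => P v), |T v|)
        + ∑ v ∈ Finset.univ.filter (fun v => ¬ P v), |T v| :=
        (Finset.sum_filter_add_sum_filter_not Finset.univ P _).symm
    _ ≤ (96000 / n) * (MA * D^2 + K * D^3) + (324 / n) * (MA * D^2 + K * D^3) := by
        apply add_le_add hneartot hfartot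
    _ ≤ (100000 / n) * (MA * D^2 + K * D^3) := by
        have hnn : 0 ≤ MA * D^2 + K * D^3 := by positivity
        have : (96000 / (n:ℝ)) + 324 / n ≤ 100000 / n := by
          rw [← add_div]
          gcongr
          norm_num
        nlinarith
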